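/- For every shape parameter λ < 0 and every x > 0, the Mills ratio of the skew normal distribution satisfies the upper bound (1 - F_λ(x)) / f_λ(x) < x^{-1} (1 - (λ²/(1+λ²)) · (1 + 1/((1+λ²) x²))^{-1}). -/

import Mathlib

open Real MeasureTheory Filter Topology

/-- Standard normal density. -/
noncomputable def stdPhi (x : ℝ) : ℝ := (Real.sqrt (2 * Real.pi))⁻¹ * Real.exp (-(x ^ 2) / 2)

/-- Standard normal cdf. -/
noncomputable def stdCdf (x : ℝ) : ℝ := ∫ t in Set.Iic x, stdPhi t

/-- Skew normal density with shape parameter l. -/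
noncomputable def snPdf (l x : ℝ) : ℝ := 2 * stdPhi x * stdCdf (l * x)

/-- Skew normal cdf with shape parameter l. -/
noncomputable def snCdf (l x : ℝ) : ℝ := ∫ t in Set.Iic x, snPdf l t

/-- Gumbel extreme value distribution function. -/
noncomputable def gumbel (x : ℝ) : ℝ := Real.exp (-Real.exp (-x))


/-!
With `G(t) = (t² + 1) / (t((1 + λ²)t² + 1))`, which is the claimed bound in closed form, the
function `H = f_λ G + F_λ` tends to `1` at `+∞`, so it suffices that `H` is strictly decreasing on
`(0, ∞)`: then `H(x) > 1`, i.e. `1 - F_λ(x) < f_λ(x) G(x)`. Since `f_λ' = -t f_λ + 2λ φ(t) φ(λt)`,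
`H' = 2φ(t) (Φ(λt)(1 + G' - tG) + λ φ(λt) G)`. For `λ < 0` the Gaussian Mills ratio bound
`Φ(λt) ≤ φ(λt) / (-λt)` together with the rational inequality `1 + G' - tG < λ² t G` makes the
bracket negative.
-/

open Set

theorem hasDerivAt_integral_Iic {E : Type*} [NormedAddCommGroup E] [NormedSpace ℝ E]
    [CompleteSpace E] {f : ℝ → E} (hfi : Integrable f) {x : ℝ} (hfx : ContinuousAt f x) :
    HasDerivAt (fun y => ∫ t in Iic y, f t) (f x) x := by
  have hsplit : ∀ y, (∫ t in Iic (x - 1), f t) + ∫ t in (x - 1)..y, f t = ∫ t in Iic y, f t :=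
    fun y => by rw [← intervalIntegral.integral_Iic_sub_Iic hfi.integrableOn hfi.integrableOn,
      add_sub_cancel]
  exact ((intervalIntegral.integral_hasDerivAt_right hfi.intervalIntegrable
    hfi.aestronglyMeasurable.stronglyMeasurableAtFilter hfx).const_add _).congr_of_eventuallyEq
    (.of_forall fun y => (hsplit y).symm)

theorem StrictAntiOn.lt_of_tendsto_atTop {α β : Type*} [LinearOrder α] [NoMaxOrder α]
    [TopologicalSpace β] [LinearOrder β] [OrderClosedTopology β] {f : α → β} {a x : α} {L : β}
    (hf : StrictAntiOn f (Ioi a)) (hL : Tendsto f atTop (𝓝 L)) (hx : a < x) : L < f x := by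
  have : Nonempty α := ⟨x⟩
  obtain ⟨y, hxy⟩ := exists_gt x
  have hy : a < y := hx.trans hxy
  refine lt_of_le_of_lt (le_of_tendsto hL ?_) (hf hx hy hxy)
  filter_upwards [eventually_ge_atTop y] with t hyt
  exact hf.antitoneOn hy (hy.trans_le hyt) hyt

section StandardNormal

theorem stdPhi_eq_gaussianPDFReal : stdPhi = ProbabilityTheory.gaussianPDFReal 0 1 := by
  ext x
  simp [stdPhi, ProbabilityTheory.gaussianPDFReal]

theorem stdPhi_pos (x : ℝ) : 0 < stdPhi x := by
  rw [stdPhi_eq_gaussianPDFReal]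
  exact ProbabilityTheory.gaussianPDFReal_pos _ _ _ one_ne_zero

theorem continuous_stdPhi : Continuous stdPhi := by
  unfold stdPhi
  fun_prop

theorem integrable_stdPhi : Integrable stdPhi := by
  rw [stdPhi_eq_gaussianPDFReal]
  exact ProbabilityTheory.integrable_gaussianPDFReal _ _

theorem integral_stdPhi : ∫ x, stdPhi x = 1 := by
  rw [stdPhi_eq_gaussianPDFReal]
  exact ProbabilityTheory.integral_gaussianPDFReal_eq_one _ one_ne_zero

theorem stdPhi_neg (x : ℝ) : stdPhi (-x) = stdPhi x := by
  simp [stdPhi]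

theorem hasDerivAt_stdPhi (x : ℝ) : HasDerivAt stdPhi (-x * stdPhi x) x := by
  have hexp : HasDerivAt (fun y : ℝ => -(y ^ 2) / 2) (-x) x :=
    (((hasDerivAt_pow 2 x).neg).div_const 2).congr_deriv (by norm_num; ring)
  exact ((hexp.exp).const_mul _).congr_deriv (by unfold stdPhi; ring)

theorem tendsto_stdPhi_atTop : Tendsto stdPhi atTop (𝓝 0) := by
  have hexponent : Tendsto (fun x : ℝ => -(x ^ 2) / 2) atTop atBot :=
    (tendsto_neg_atTop_atBot.comp (tendsto_pow_atTop two_ne_zero)).atBot_div_const two_pos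
  exact mul_zero (Real.sqrt (2 * Real.pi))⁻¹ ▸
    (tendsto_exp_atBot.comp hexponent).const_mul (Real.sqrt (2 * Real.pi))⁻¹

theorem integrable_mul_stdPhi : Integrable fun x => x * stdPhi x := by
  refine ((integrable_mul_exp_neg_mul_sq (by norm_num : (0 : ℝ) < 1 / 2)).const_mul
    (Real.sqrt (2 * Real.pi))⁻¹).congr (.of_forall fun x => ?_)
  simp only [stdPhi]
  ring_nf

theorem stdCdf_pos (x : ℝ) : 0 < stdCdf x := by
  rw [stdCdf, setIntegral_pos_iff_support_of_nonneg_ae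
    (.of_forall fun t => (stdPhi_pos t).le) integrable_stdPhi.integrableOn]
  have hsupp : Function.support stdPhi = univ :=
    Function.support_eq_univ fun t => (stdPhi_pos t).ne'
  simp [hsupp]

theorem stdCdf_le_one (x : ℝ) : stdCdf x ≤ 1 :=
  integral_stdPhi ▸ setIntegral_le_integral integrable_stdPhi
    (.of_forall fun t => (stdPhi_pos t).le)

theorem hasDerivAt_stdCdf (x : ℝ) : HasDerivAt stdCdf (stdPhi x) x :=
  hasDerivAt_integral_Iic integrable_stdPhi continuous_stdPhi.continuousAt

theorem continuous_stdCdf : Continuous stdCdf :=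
  continuous_iff_continuousAt.2 fun x => (hasDerivAt_stdCdf x).continuousAt

theorem integral_Ioi_stdPhi (y : ℝ) : ∫ t in Ioi y, stdPhi t = stdCdf (-y) := by
  rw [stdCdf, ← integral_comp_neg_Ioi]
  simp only [stdPhi_neg]

theorem stdCdf_neg (y : ℝ) : stdCdf (-y) = 1 - stdCdf y := by
  rw [← integral_Ioi_stdPhi, ← integral_stdPhi, stdCdf,
    ← intervalIntegral.integral_Iic_add_Ioi integrable_stdPhi.integrableOn
      integrable_stdPhi.integrableOn, add_sub_cancel_left]

theorem stdCdf_neg_le_stdPhi_div {s : ℝ} (hs : 0 < s) : stdCdf (-s) ≤ stdPhi s / s := by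
  have hmoment : ∫ t in Ioi s, t * stdPhi t = stdPhi s := by
    have hderiv : ∀ t ∈ Ici s, HasDerivAt (-stdPhi) (t * stdPhi t) t :=
      fun t _ => (hasDerivAt_stdPhi t).neg.congr_deriv (by ring)
    have hlim : Tendsto (-stdPhi) atTop (𝓝 0) := neg_zero (G := ℝ) ▸ tendsto_stdPhi_atTop.neg
    rw [integral_Ioi_of_hasDerivAt_of_tendsto' hderiv integrable_mul_stdPhi.integrableOn hlim]
    simp
  rw [← integral_Ioi_stdPhi, ← hmoment, ← integral_div]
  refine setIntegral_mono_on integrable_stdPhi.integrableOn ?_ measurableSet_Ioi fun t ht => ?_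
  · exact (integrable_mul_stdPhi.div_const s).integrableOn
  · rw [mul_div_right_comm]
    exact le_mul_of_one_le_left (stdPhi_pos t).le ((one_le_div hs).2 (le_of_lt ht))

theorem stdCdf_mul_add_lt_zero {l t A B : ℝ} (hl : l < 0) (ht : 0 < t) (hB : 0 < B)
    (hA : A < l ^ 2 * t * B) : stdCdf (l * t) * A + l * stdPhi (l * t) * B < 0 := by
  have hs : 0 < -(l * t) := by nlinarith
  have hmills : stdCdf (l * t) ≤ stdPhi (l * t) / -(l * t) := by
    simpa [stdPhi_neg] using stdCdf_neg_le_stdPhi_div hs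
  have hφ := stdPhi_pos (l * t)
  rcases le_or_gt A 0 with hA0 | hA0
  · have hneg : l * stdPhi (l * t) * B < 0 :=
      mul_neg_of_neg_of_pos (mul_neg_of_neg_of_pos hl hφ) hB
    nlinarith [stdCdf_pos (l * t)]
  · calc stdCdf (l * t) * A + l * stdPhi (l * t) * B
        ≤ stdPhi (l * t) / -(l * t) * A + l * stdPhi (l * t) * B := by gcongr
      _ < stdPhi (l * t) / -(l * t) * (l ^ 2 * t * B) + l * stdPhi (l * t) * B := by gcongr
      _ = 0 := by field_simp; ring

end StandardNormal

section SkewNormal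

variable (l : ℝ)

theorem continuous_snPdf : Continuous (snPdf l) := by
  have := continuous_stdPhi
  have := continuous_stdCdf
  unfold snPdf
  fun_prop

theorem snPdf_pos (x : ℝ) : 0 < snPdf l x := by
  have := stdPhi_pos x
  have := stdCdf_pos (l * x)
  unfold snPdf
  positivity

theorem snPdf_le_two_mul_stdPhi (x : ℝ) : snPdf l x ≤ 2 * stdPhi x :=
  mul_le_of_le_one_right (by linarith [stdPhi_pos x]) (stdCdf_le_one _)

theorem integrable_snPdf : Integrable (snPdf l) := by
  refine (integrable_stdPhi.const_mul 2).mono' (continuous_snPdf l).aestronglyMeasurable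
    (.of_forall fun x => ?_)
  rw [Real.norm_of_nonneg (snPdf_pos l x).le]
  exact snPdf_le_two_mul_stdPhi l x

theorem snPdf_neg (x : ℝ) : snPdf l (-x) = 2 * stdPhi x - snPdf l x := by
  rw [snPdf, snPdf, stdPhi_neg, mul_neg, stdCdf_neg]
  ring

theorem integral_snPdf : ∫ x, snPdf l x = 1 := by
  have hsym : ∫ x, snPdf l (-x) = 2 - ∫ x, snPdf l x := by
    simp_rw [snPdf_neg]
    rw [integral_sub (integrable_stdPhi.const_mul 2) (integrable_snPdf l), integral_const_mul,
      integral_stdPhi, mul_one]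
  rw [integral_neg_eq_self] at hsym
  linarith

theorem tendsto_snCdf_atTop : Tendsto (snCdf l) atTop (𝓝 1) :=
  integral_snPdf l ▸ (aecover_Iic tendsto_id).integral_tendsto_of_countably_generated
    (integrable_snPdf l)

theorem tendsto_snPdf_atTop : Tendsto (snPdf l) atTop (𝓝 0) := by
  refine tendsto_of_tendsto_of_tendsto_of_le_of_le tendsto_const_nhds
    (mul_zero (2 : ℝ) ▸ tendsto_stdPhi_atTop.const_mul 2) (fun x => (snPdf_pos l x).le)
    (snPdf_le_two_mul_stdPhi l)

theorem hasDerivAt_snCdf (x : ℝ) : HasDerivAt (snCdf l) (snPdf l x) x :=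
  hasDerivAt_integral_Iic (integrable_snPdf l) (continuous_snPdf l).continuousAt

theorem hasDerivAt_snPdf (x : ℝ) :
    HasDerivAt (snPdf l) (-x * snPdf l x + 2 * l * stdPhi x * stdPhi (l * x)) x := by
  have hcdf : HasDerivAt (fun y => stdCdf (l * y)) (stdPhi (l * x) * l) x :=
    (hasDerivAt_stdCdf (l * x)).comp x ((hasDerivAt_id x).const_mul l |>.congr_deriv (mul_one l))
  exact (((hasDerivAt_stdPhi x).const_mul 2).mul hcdf).congr_deriv (by unfold snPdf; ring)

end SkewNormal

noncomputable def snMillsBound (l t : ℝ) : ℝ := (t ^ 2 + 1) / (t * ((1 + l ^ 2) * t ^ 2 + 1))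

section MillsBound

variable (l : ℝ) {t : ℝ}

theorem snMillsBound_pos (ht : 0 < t) : 0 < snMillsBound l t := by
  unfold snMillsBound
  positivity

theorem snMillsBound_le_inv (ht : 0 < t) : snMillsBound l t ≤ t⁻¹ := by
  rw [snMillsBound, inv_eq_one_div, div_le_div_iff₀ (by positivity) ht]
  nlinarith [mul_nonneg (sq_nonneg l) (pow_pos ht 3).le]

theorem tendsto_snMillsBound_atTop : Tendsto (snMillsBound l) atTop (𝓝 0) := by
  refine tendsto_of_tendsto_of_tendsto_of_le_of_le' tendsto_const_nhds tendsto_inv_atTop_zero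
    ?_ ?_ <;> filter_upwards [eventually_gt_atTop 0] with t ht
  exacts [(snMillsBound_pos l ht).le, snMillsBound_le_inv l ht]

theorem hasDerivAt_snMillsBound (ht : t ≠ 0) :
    HasDerivAt (snMillsBound l) ((2 * t * (t * ((1 + l ^ 2) * t ^ 2 + 1)) -
      (t ^ 2 + 1) * (3 * (1 + l ^ 2) * t ^ 2 + 1)) / (t * ((1 + l ^ 2) * t ^ 2 + 1)) ^ 2) t := by
  have hnum : HasDerivAt (fun s : ℝ => s ^ 2 + 1) (2 * t) t := by
    simpa using (hasDerivAt_pow 2 t).add_const 1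
  have hden : HasDerivAt (fun s : ℝ => s * ((1 + l ^ 2) * s ^ 2 + 1))
      (3 * (1 + l ^ 2) * t ^ 2 + 1) t := by
    have := (hasDerivAt_id t).mul (((hasDerivAt_pow 2 t).const_mul (1 + l ^ 2)).add_const 1)
    exact this.congr_deriv (by simp; ring)
  exact hnum.div hden (by positivity)

theorem one_add_deriv_snMillsBound_sub_lt (ht : 0 < t) :
    1 + deriv (snMillsBound l) t - t * snMillsBound l t < l ^ 2 * t * snMillsBound l t := by
  rw [(hasDerivAt_snMillsBound l ht.ne').deriv, ← sub_pos]
  have key : l ^ 2 * t * snMillsBound l t - (1 + (2 * t * (t * ((1 + l ^ 2) * t ^ 2 + 1)) -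
      (t ^ 2 + 1) * (3 * (1 + l ^ 2) * t ^ 2 + 1)) / (t * ((1 + l ^ 2) * t ^ 2 + 1)) ^ 2 -
      t * snMillsBound l t) = (l ^ 2 * t ^ 2 * ((1 + l ^ 2) * t ^ 2 + 1) +
      (1 + l ^ 2) * t ^ 4 + (2 + 3 * l ^ 2) * t ^ 2 + 1) / (t * ((1 + l ^ 2) * t ^ 2 + 1)) ^ 2 := by
    unfold snMillsBound
    field_simp
    ring
  rw [key]
  positivity

theorem hasDerivAt_snPdf_mul_snMillsBound_add_snCdf (ht : t ≠ 0) :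
    HasDerivAt (fun s => snPdf l s * snMillsBound l s + snCdf l s)
      (2 * stdPhi t * (stdCdf (l * t) * (1 + deriv (snMillsBound l) t - t * snMillsBound l t) +
        l * stdPhi (l * t) * snMillsBound l t)) t := by
  have hG := hasDerivAt_snMillsBound l ht
  rw [hG.deriv]
  exact (((hasDerivAt_snPdf l t).mul hG).add (hasDerivAt_snCdf l t)).congr_deriv
    (by unfold snPdf; ring)

end MillsBound

theorem strictAntiOn_snPdf_mul_snMillsBound_add_snCdf {l : ℝ} (hl : l < 0) :
    StrictAntiOn (fun s => snPdf l s * snMillsBound l s + snCdf l s) (Ioi 0) := by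
  refine strictAntiOn_of_deriv_neg (convex_Ioi 0) (fun t ht => ?_) fun t ht => ?_
  · exact (hasDerivAt_snPdf_mul_snMillsBound_add_snCdf l (ne_of_gt ht)).continuousAt
      |>.continuousWithinAt
  · rw [interior_Ioi] at ht
    rw [(hasDerivAt_snPdf_mul_snMillsBound_add_snCdf l (ne_of_gt ht)).deriv]
    exact mul_neg_of_pos_of_neg (mul_pos two_pos (stdPhi_pos t)) (stdCdf_mul_add_lt_zero hl ht
      (snMillsBound_pos l ht) (one_add_deriv_snMillsBound_sub_lt l ht))

theorem tendsto_snPdf_mul_snMillsBound_add_snCdf_atTop (l : ℝ) :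
    Tendsto (fun s => snPdf l s * snMillsBound l s + snCdf l s) atTop (𝓝 1) := by
  simpa using ((tendsto_snPdf_atTop l).mul (tendsto_snMillsBound_atTop l)).add
    (tendsto_snCdf_atTop l)

theorem skew_normal_mills_upper_neg (l : ℝ) (hl : l < 0) (x : ℝ) (hx : 0 < x) :
    (1 - snCdf l x) / snPdf l x <
      x⁻¹ * (1 - (l ^ 2 / (1 + l ^ 2)) * (1 + 1 / ((1 + l ^ 2) * x ^ 2))⁻¹) := by
  have hbound : x⁻¹ * (1 - (l ^ 2 / (1 + l ^ 2)) * (1 + 1 / ((1 + l ^ 2) * x ^ 2))⁻¹) =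
      snMillsBound l x := by
    unfold snMillsBound
    field_simp
    ring
  have hH : 1 < snPdf l x * snMillsBound l x + snCdf l x :=
    (strictAntiOn_snPdf_mul_snMillsBound_add_snCdf hl).lt_of_tendsto_atTop
      (tendsto_snPdf_mul_snMillsBound_add_snCdf_atTop l) hx
  rw [hbound, div_lt_iff₀ (snPdf_pos l x)]
  linarith
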